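/- arXiv:2602.06014 — 3 statements merged into one kernel-verified Lean document; each statement's English description precedes it below -/
import Mathlib

section
/- Let r ≥ 3 and let x lie in the interior of the simplex Δ_r. Then the winner map g satisfies strict negative-feedback monotonicity: for any distinct indices i ≠ j, if x_i > x_j then g_i(x) < g_j(x). -/
/-!
With `s_k = √x_k`, index `i` wins iff `Z_k ≤ s_k Z_i / s_i` for every `k ≠ i`, so conditioning
on `Z_i = z` gives `g_i(x) = ∫ ∏_{k ≠ i} Φ(s_k z / s_i) dγ(z)` for the standard Gaussian `γ`.
Pair `z` with `-z` and use `Φ(-u) = 1 - Φ(u)`. For `z > 0`, put `t = z / s_i < t' = z / s_j`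
and let `p(t) = ∏ Φ(s_k t)`, `q(t) = ∏ (1 - Φ(s_k t))` over the indices other than `i, j`.
The symmetrised integrands of `i` and `j` are `Φ(s_j t) p(t) + (1 - Φ(s_j t)) q(t)` and
`Φ(s_i t') p(t') + (1 - Φ(s_i t')) q(t')`. Here `1/2 < Φ(s_j t) ≤ Φ(s_i t')`,
`q ≤ p` on `[0, ∞)`, `p + q` is nondecreasing there, and `q` is strictly decreasing as soon as
a third index exists; together these force the first integrand below the second.
-/
open MeasureTheory ProbabilityTheory Filter Real Topology

open scoped Classical

namespace ThompsonStability

variable {Ω : Type} [MeasurableSpace Ω]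

/-- The standard normal cumulative distribution function `Φ`. -/
noncomputable def gaussCDF (x : ℝ) : ℝ := ((gaussianReal 0 1) (Set.Iic x)).toReal

/-- `pullCount A a t ω` is the number of pulls `N_{a,t}` of arm `a` during rounds `1,…,t`. -/
def pullCount {K : ℕ} (A : ℕ → Ω → Fin K) (a : Fin K) (t : ℕ) (ω : Ω) : ℕ :=
  ((Finset.Icc 1 t).filter fun s => A s ω = a).card

/-- `pullTime A a k ω` is the time `T_a(k)` of the `k`-th pull of arm `a`. -/
noncomputable def pullTime {K : ℕ} (A : ℕ → Ω → Fin K) (a : Fin K) (k : ℕ) (ω : Ω) : ℕ :=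
  sInf {t | k ≤ pullCount A a t ω}

/-- The reward process `R_{a,t} = μ_a + Z_{a,t}`, where the noise `Z_{a,t}` is the
coordinate `W (t, a, false)` of the ambient i.i.d. standard Gaussian family `W`. -/
def reward {K : ℕ} (μ : Fin K → ℝ) (W : ℕ × Fin K × Bool → Ω → ℝ)
    (t : ℕ) (a : Fin K) (ω : Ω) : ℝ := μ a + W (t, a, false) ω

/-- The empirical mean `μ̂_{a,t}` of arm `a` after `t` rounds. -/
noncomputable def empMean {K : ℕ} (A : ℕ → Ω → Fin K) (R : ℕ → Fin K → Ω → ℝ)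
    (a : Fin K) (t : ℕ) (ω : Ω) : ℝ :=
  (∑ s ∈ (Finset.Icc 1 t).filter fun s => A s ω = a, R s a ω) / (pullCount A a t ω : ℝ)

/-- The sample standard deviation `σ̂_{a,t}` of the rewards of arm `a` up to time `t`,
with the convention that it equals `1` when `N_{a,t} ≤ 1`. -/
noncomputable def sampleSD {K : ℕ} (A : ℕ → Ω → Fin K) (R : ℕ → Fin K → Ω → ℝ)
    (a : Fin K) (t : ℕ) (ω : Ω) : ℝ :=
  if pullCount A a t ω ≤ 1 then 1
  else Real.sqrt ((∑ s ∈ (Finset.Icc 1 t).filter fun s => A s ω = a,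
    (R s a ω - empMean A R a t ω) ^ 2) / ((pullCount A a t ω : ℝ) - 1))

/-- The history σ-algebra `F_t`, generated by `(A_1, R_{A_1,1}, …, A_t, R_{A_t,t})`. -/
def histSigma {K : ℕ} (A : ℕ → Ω → Fin K) (R : ℕ → Fin K → Ω → ℝ) (t : ℕ) :
    MeasurableSpace Ω :=
  MeasurableSpace.comap
    (fun ω (s : Fin t) => (A ((s : ℕ) + 1) ω, R ((s : ℕ) + 1) (A ((s : ℕ) + 1) ω) ω))
    inferInstance

/-- The Thompson sample (index) `θ_{a,t+1} = μ̂_{a,t} + √(σ(𝒜)/N_{a,t}) ζ_{a,t+1}` used by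
variance-inflated Thompson sampling, where `ζ_{a,t+1} = W (t+1, a, true)` is a fresh
standard Gaussian draw, so that `θ_{a,t+1} | F_t ~ N(μ̂_{a,t}, σ(𝒜)/N_{a,t})`,
independently across arms. -/
noncomputable def tsIndex {K : ℕ} (μ : Fin K → ℝ) (W : ℕ × Fin K × Bool → Ω → ℝ)
    (σA : ℝ) (A : ℕ → Ω → Fin K) (t : ℕ) (a : Fin K) (ω : Ω) : ℝ :=
  empMean A (reward μ W) a t ω +
    Real.sqrt (σA / (pullCount A a t ω : ℝ)) * W (t + 1, a, true) ω

/-- The index `Υ_{a,t+1} = μ̂_{a,t} + ζ_{a,t+1}/√N_{a,t} + √(2 β(𝒜) log T / N_{a,t})` used by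
Thompson sampling with mean bonus (the posterior sample `θ̃_{a,t+1}` plus the bonus
`B_{a,t}`), where `ζ_{a,t+1} = W (t+1, a, true)` is a fresh standard Gaussian draw. -/
noncomputable def mbIndex {K : ℕ} (μ : Fin K → ℝ) (W : ℕ × Fin K × Bool → Ω → ℝ)
    (βA : ℝ) (T : ℕ) (A : ℕ → Ω → Fin K) (t : ℕ) (a : Fin K) (ω : Ω) : ℝ :=
  empMean A (reward μ W) a t ω + W (t + 1, a, true) ω / Real.sqrt (pullCount A a t ω : ℝ) +
    Real.sqrt (2 * βA * Real.log T / (pullCount A a t ω : ℝ))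

/-- A run of variance-inflated Thompson sampling with inflation factor `σA` on the `K`-armed
Gaussian bandit with means `μ`: `W` is an i.i.d. family of standard Gaussians furnishing both
the reward noise (`… false`) and the posterior sampling randomness (`… true`); each arm is
pulled once during the initialization rounds `1,…,K`; and for every `t ≥ K` the next arm
`A_{t+1}` is measurable with respect to the history `F_t` together with the fresh draws
`ζ_{·,t+1}`, and maximizes the Thompson index `θ_{·,t+1}`. -/
structure VarInflTS (K : ℕ) (P : Measure Ω) (μ : Fin K → ℝ) (σA : ℝ)
    (A : ℕ → Ω → Fin K) (W : ℕ × Fin K × Bool → Ω → ℝ) : Prop where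
  meas_A : ∀ t, Measurable (A t)
  meas_W : ∀ i, Measurable (W i)
  indep_W : iIndepFun W P
  gauss_W : ∀ i, Measure.map (W i) P = gaussianReal 0 1
  init : ∀ ω (a : Fin K), pullCount A a K ω = 1
  adapted : ∀ t, K ≤ t →
    Measurable[histSigma A (reward μ W) t ⊔
      MeasurableSpace.comap (fun ω (a : Fin K) => W (t + 1, a, true) ω) inferInstance]
      (A (t + 1))
  argmax : ∀ t, K ≤ t → ∀ ω (a : Fin K),
    tsIndex μ W σA A t a ω ≤ tsIndex μ W σA A t (A (t + 1) ω) ω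

/-- A run (with horizon `T`) of Thompson sampling with mean bonus, with bonus strength `βA`,
on the `K`-armed Gaussian bandit with means `μ`; fields as in `VarInflTS`, with the selected
arm maximizing the bonus-shifted index `Υ_{·,t+1}`. -/
structure MeanBonusTS (K : ℕ) (P : Measure Ω) (μ : Fin K → ℝ) (βA : ℝ) (T : ℕ)
    (A : ℕ → Ω → Fin K) (W : ℕ × Fin K × Bool → Ω → ℝ) : Prop where
  meas_A : ∀ t, Measurable (A t)
  meas_W : ∀ i, Measurable (W i)
  indep_W : iIndepFun W P
  gauss_W : ∀ i, Measure.map (W i) P = gaussianReal 0 1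
  init : ∀ ω (a : Fin K), pullCount A a K ω = 1
  adapted : ∀ t, K ≤ t →
    Measurable[histSigma A (reward μ W) t ⊔
      MeasurableSpace.comap (fun ω (a : Fin K) => W (t + 1, a, true) ω) inferInstance]
      (A (t + 1))
  argmax : ∀ t, K ≤ t → ∀ ω (a : Fin K),
    mbIndex μ W βA T A t a ω ≤ mbIndex μ W βA T A t (A (t + 1) ω) ω

/-- The concentration event `E_T`:
`|μ̂_{a,t} − μ_a| ≤ √(C log log T / N_{a,t})` for all (post-initialization) `t ≤ T` and `a`. -/
def concEvent {K : ℕ} (μ : Fin K → ℝ) (A : ℕ → Ω → Fin K) (W : ℕ × Fin K × Bool → Ω → ℝ)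
    (Cc : ℝ) (T : ℕ) : Set Ω :=
  {ω | ∀ a : Fin K, ∀ t, K ≤ t → t ≤ T →
    |empMean A (reward μ W) a t ω - μ a| ≤
      Real.sqrt (Cc * Real.log (Real.log T) / (pullCount A a t ω : ℝ))}

/-- The few-suboptimal-pulls event `Ω_T = {N_sub(T) ≤ σ(𝒜) log T log log T}`. -/
def fewSubEvent {K : ℕ} (μ : Fin K → ℝ) (μstar : ℝ) (A : ℕ → Ω → Fin K)
    (σA : ℝ) (T : ℕ) : Set Ω :=
  {ω | ∑ b ∈ Finset.univ.filter (fun b : Fin K => μ b ≠ μstar), (pullCount A b T ω : ℝ) ≤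
    σA * Real.log T * Real.log (Real.log T)}

/-- The good event `G_T = G_{T,1} ∩ G_{T,2}` for Thompson sampling with mean bonus:
`G_{T,1}` is mean concentration at scale `√(C₁ log T / N_{a,t})`, and `G_{T,2}` bounds all
the standard normal draws used by the algorithm by `√(2 log (2 K T³))`. -/
def goodEvent {K : ℕ} (μ : Fin K → ℝ) (A : ℕ → Ω → Fin K) (W : ℕ × Fin K × Bool → Ω → ℝ)
    (C₁ : ℝ) (T : ℕ) : Set Ω :=
  {ω | (∀ a : Fin K, ∀ t, K ≤ t → t ≤ T →
      |empMean A (reward μ W) a t ω - μ a| ≤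
        Real.sqrt (C₁ * Real.log T / (pullCount A a t ω : ℝ))) ∧
    (∀ a : Fin K, ∀ t ≤ T, |W (t, a, true) ω| ≤ Real.sqrt (2 * Real.log (2 * K * T ^ 3)))}

instance (v : NNReal) : (gaussianReal 0 v).IsNegInvariant :=
  ⟨gaussianReal_map_neg.trans (by rw [neg_zero])⟩

instance : NullSingletonClass (gaussianReal 0 1) := nullSingletonClass_gaussianReal one_ne_zero

lemma gaussCDF_eq_cdf : gaussCDF = cdf (gaussianReal 0 1) :=
  funext fun c => (cdf_eq_real _ c).symm

lemma gaussCDF_nonneg (c : ℝ) : 0 ≤ gaussCDF c := ENNReal.toReal_nonneg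

lemma gaussCDF_le_one (c : ℝ) : gaussCDF c ≤ 1 := by
  rw [gaussCDF_eq_cdf]; exact cdf_le_one _ c

lemma gaussCDF_strictMono : StrictMono gaussCDF := by
  intro c d hcd
  have hIoc : 0 < gaussianReal 0 1 (Set.Ioc c d) := by
    refine pos_iff_ne_zero.2 fun h => ?_
    have := gaussianReal_absolutelyContinuous' 0 one_ne_zero h
    simp only [Real.volume_Ioc, ENNReal.ofReal_eq_zero, tsub_le_iff_right, zero_add] at this
    exact this.not_gt hcd
  have hsplit : gaussianReal 0 1 (Set.Iic d)
      = gaussianReal 0 1 (Set.Iic c) + gaussianReal 0 1 (Set.Ioc c d) := by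
    rw [← measure_union (Set.Iic_disjoint_Ioc le_rfl) measurableSet_Ioc,
      Set.Iic_union_Ioc_eq_Iic hcd.le]
  unfold gaussCDF
  rw [hsplit, ENNReal.toReal_add (measure_ne_top _ _) (measure_ne_top _ _)]
  linarith [ENNReal.toReal_pos hIoc.ne' (measure_ne_top _ _)]

lemma gaussCDF_mono : Monotone gaussCDF := gaussCDF_strictMono.monotone

lemma gaussCDF_pos (c : ℝ) : 0 < gaussCDF c :=
  (gaussCDF_nonneg (c - 1)).trans_lt (gaussCDF_strictMono (by linarith))

lemma gaussCDF_lt_one (c : ℝ) : gaussCDF c < 1 :=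
  (gaussCDF_strictMono (lt_add_one c)).trans_le (gaussCDF_le_one _)

lemma gaussCDF_neg (c : ℝ) : gaussCDF (-c) = 1 - gaussCDF c := by
  have hIic : gaussianReal 0 1 (Set.Iic (-c)) = gaussianReal 0 1 (Set.Ici c) := by
    rw [← Set.neg_Ici, Measure.measure_neg]
  have hIci : gaussianReal 0 1 (Set.Ici c) = 1 - gaussianReal 0 1 (Set.Iic c) := by
    rw [← Set.compl_Iio, prob_compl_eq_one_sub measurableSet_Iio, measure_congr Iio_ae_eq_Iic]
  unfold gaussCDF
  rw [hIic, hIci, ENNReal.toReal_sub_of_le prob_le_one ENNReal.one_ne_top, ENNReal.toReal_one]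

lemma half_lt_gaussCDF {c : ℝ} (hc : 0 < c) : 1 / 2 < gaussCDF c := by
  have := gaussCDF_strictMono (neg_lt_self hc)
  rw [gaussCDF_neg] at this
  linarith

lemma measurable_gaussCDF : Measurable gaussCDF := gaussCDF_mono.measurable

lemma integral_pos_of_add_comp_neg_pos {μ : Measure ℝ} [μ.IsNegInvariant] [NeZero μ]
    (hμ0 : μ {0} = 0) {f : ℝ → ℝ} (hf : Integrable f μ)
    (hpos : ∀ z, 0 < z → 0 < f z + f (-z)) : 0 < ∫ z, f z ∂μ := by
  have hfneg : Integrable (fun z => f (-z)) μ := hf.comp_neg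
  have hae : ∀ᵐ z ∂μ, 0 < f z + f (-z) := by
    filter_upwards [measure_eq_zero_iff_ae_notMem.1 hμ0] with z hz
    rcases Ne.lt_or_gt hz with hz | hz
    · simpa [add_comm] using hpos (-z) (neg_pos.2 hz)
    · exact hpos z hz
  have htwice : ∫ z, (f z + f (-z)) ∂μ = 2 * ∫ z, f z ∂μ := by
    rw [integral_add hf hfneg, integral_neg_eq_self f μ, two_mul]
  have : 0 < ∫ z, (f z + f (-z)) ∂μ := by
    rw [integral_pos_iff_support_of_nonneg_ae (hae.mono fun z hz => hz.le) (hf.add hfneg)]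
    refine pos_iff_ne_zero.2 fun hnull => NeZero.ne μ (ae_eq_bot.1 ?_)
    refine Filter.eventually_false_iff_eq_bot.1 ?_
    filter_upwards [hae, measure_eq_zero_iff_ae_notMem.1 hnull] with z hz hz'
    exact hz' hz.ne'
  linarith

lemma prod_add_prod_one_sub_le_prod_add_prod_one_sub {ι : Type*} (S : Finset ι) {p q : ι → ℝ}
    (hq : ∀ k ∈ S, 1 / 2 ≤ q k) (hqp : ∀ k ∈ S, q k ≤ p k) (hp : ∀ k ∈ S, p k ≤ 1) :
    ∏ k ∈ S, q k + ∏ k ∈ S, (1 - q k) ≤ ∏ k ∈ S, p k + ∏ k ∈ S, (1 - p k) := by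
  classical
  induction S using Finset.induction_on with
  | empty => simp
  | insert a S ha ih =>
    simp only [Finset.forall_mem_insert] at hq hqp hp
    simp only [Finset.prod_insert ha]
    have hQP : ∏ k ∈ S, q k ≤ ∏ k ∈ S, p k :=
      Finset.prod_le_prod (fun k hk => by linarith [hq.2 k hk]) hqp.2
    have hP'P : ∏ k ∈ S, (1 - p k) ≤ ∏ k ∈ S, p k :=
      Finset.prod_le_prod (fun k hk => by linarith [hp.2 k hk])
        fun k hk => by linarith [hq.2 k hk, hqp.2 k hk]
    have := ih hq.2 hqp.2 hp.2
    nlinarith [mul_nonneg (sub_nonneg.2 hp.1) (sub_nonneg.2 this),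
      mul_nonneg (show 0 ≤ 2 * q a - 1 by linarith) (sub_nonneg.2 hQP),
      mul_nonneg (sub_nonneg.2 hqp.1) (sub_nonneg.2 hP'P)]

lemma mul_add_one_sub_mul_lt_mul_add_one_sub_mul {l₁ l₂ h₁ h₂ h₁' h₂' : ℝ}
    (hl₂ : 1 / 2 < l₂) (hl : l₂ ≤ l₁) (hh₁ : h₁' ≤ h₁) (hh' : h₁' < h₂')
    (hsum : h₂ + h₂' ≤ h₁ + h₁') :
    l₂ * h₂ + (1 - l₂) * h₂' < l₁ * h₁ + (1 - l₁) * h₁' := by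
  nlinarith [mul_nonneg (sub_nonneg.2 hl) (sub_nonneg.2 hh₁),
    mul_pos (show 0 < 2 * l₂ - 1 by linarith) (sub_pos.2 hh'),
    mul_nonneg (show 0 ≤ l₂ by linarith) (show 0 ≤ (h₁ - h₂) - (h₂' - h₁') by linarith)]

section WinnerIntegrand

variable {ι : Type*} [Fintype ι] [DecidableEq ι]

/-- Conditionally on `Z_i = z`, the probability that `Z_i / s_i` is the largest of the
`Z_k / s_k`. -/
noncomputable def condWinProb (s : ι → ℝ) (i : ι) (z : ℝ) : ℝ :=
  ∏ k ∈ Finset.univ.erase i, gaussCDF (s k * (z / s i))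

lemma condWinProb_eq_mul_prod (s : ι → ℝ) {i j : ι} (hji : j ≠ i) (z : ℝ) :
    condWinProb s i z = gaussCDF (s j * (z / s i)) *
      ∏ k ∈ (Finset.univ.erase i).erase j, gaussCDF (s k * (z / s i)) :=
  (Finset.mul_prod_erase _ _ (Finset.mem_erase.2 ⟨hji, Finset.mem_univ j⟩)).symm

lemma condWinProb_nonneg (s : ι → ℝ) (i : ι) (z : ℝ) : 0 ≤ condWinProb s i z :=
  Finset.prod_nonneg fun _ _ => gaussCDF_nonneg _

lemma condWinProb_le_one (s : ι → ℝ) (i : ι) (z : ℝ) : condWinProb s i z ≤ 1 :=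
  Finset.prod_le_one (fun _ _ => gaussCDF_nonneg _) fun _ _ => gaussCDF_le_one _

lemma measurable_condWinProb (s : ι → ℝ) (i : ι) : Measurable (condWinProb s i) :=
  Finset.measurable_prod _ fun _ _ => measurable_gaussCDF.comp (by fun_prop)

lemma integrable_condWinProb (s : ι → ℝ) (i : ι) :
    Integrable (condWinProb s i) (gaussianReal 0 1) :=
  Integrable.of_bound (measurable_condWinProb s i).aestronglyMeasurable 1
    (ae_of_all _ fun z => by
      rw [Real.norm_of_nonneg (condWinProb_nonneg s i z)]
      exact condWinProb_le_one s i z)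

lemma condWinProb_add_neg_lt {s : ι → ℝ} (hs : ∀ k, 0 < s k) {i j : ι} (hji : s j < s i)
    (hk : ∃ k, k ≠ i ∧ k ≠ j) {z : ℝ} (hz : 0 < z) :
    condWinProb s i z + condWinProb s i (-z) < condWinProb s j z + condWinProb s j (-z) := by
  have hij : i ≠ j := fun h => hji.ne (h ▸ rfl)
  set S := (Finset.univ.erase i).erase j
  have hS : S.Nonempty := by
    obtain ⟨k, hki, hkj⟩ := hk
    exact ⟨k, by simp [S, hki, hkj]⟩
  have hSj : (Finset.univ.erase j).erase i = S := Finset.erase_right_comm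
  set t₁ := z / s j
  set t₂ := z / s i
  have ht₂ : 0 < t₂ := div_pos hz (hs i)
  have ht : t₂ < t₁ := div_lt_div_of_pos_left hz (hs j) hji
  have hneg : ∀ k l, gaussCDF (s k * (-z / s l)) = 1 - gaussCDF (s k * (z / s l)) := by
    intro k l
    rw [neg_div, mul_neg, gaussCDF_neg]
  rw [condWinProb_eq_mul_prod s hij.symm, condWinProb_eq_mul_prod s hij.symm,
    condWinProb_eq_mul_prod s hij, condWinProb_eq_mul_prod s hij, hSj]
  simp only [hneg]
  refine mul_add_one_sub_mul_lt_mul_add_one_sub_mul ?_ ?_ ?_ ?_ ?_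
  · exact half_lt_gaussCDF (mul_pos (hs j) ht₂)
  · exact gaussCDF_mono (mul_le_mul hji.le ht.le ht₂.le (hs i).le)
  · refine Finset.prod_le_prod (fun k _ => sub_nonneg.2 (gaussCDF_le_one _)) fun k _ => ?_
    linarith [half_lt_gaussCDF (mul_pos (hs k) (ht₂.trans ht))]
  · refine Finset.prod_lt_prod_of_nonempty (fun k _ => sub_pos.2 (gaussCDF_lt_one _))
      (fun k _ => ?_) hS
    linarith [gaussCDF_strictMono (mul_lt_mul_of_pos_left ht (hs k))]
  · exact prod_add_prod_one_sub_le_prod_add_prod_one_sub S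
      (fun k _ => (half_lt_gaussCDF (mul_pos (hs k) ht₂)).le)
      (fun k _ => gaussCDF_mono (mul_le_mul_of_nonneg_left ht.le (hs k).le))
      fun k _ => gaussCDF_le_one _

lemma integral_condWinProb_lt {s : ι → ℝ} (hs : ∀ k, 0 < s k) {i j : ι} (hji : s j < s i)
    (hk : ∃ k, k ≠ i ∧ k ≠ j) :
    ∫ z, condWinProb s i z ∂(gaussianReal 0 1) < ∫ z, condWinProb s j z ∂(gaussianReal 0 1) := by
  rw [← sub_pos, ← integral_sub (integrable_condWinProb s j) (integrable_condWinProb s i)]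
  refine integral_pos_of_add_comp_neg_pos (measure_singleton 0)
    ((integrable_condWinProb s j).sub (integrable_condWinProb s i)) fun z hz => ?_
  linarith [condWinProb_add_neg_lt hs hji hk hz]

end WinnerIntegrand

lemma measure_pi_succAbove_le_eq_lintegral {n : ℕ} (ν : Measure ℝ) [SigmaFinite ν]
    (i : Fin (n + 1)) {φ : Fin n → ℝ → ℝ} (hφ : ∀ m, Measurable (φ m)) :
    Measure.pi (fun _ => ν) {y | ∀ m, y (i.succAbove m) ≤ φ m (y i)}
      = ∫⁻ z, ∏ m, ν (Set.Iic (φ m z)) ∂ν := by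
  set T : Set (ℝ × (Fin n → ℝ)) := {p | ∀ m, p.2 m ≤ φ m p.1}
  have hT : MeasurableSet T := by
    simp only [T, Set.ofPred_forall]
    exact MeasurableSet.iInter fun m => measurableSet_le (by fun_prop) ((hφ m).comp measurable_fst)
  have hpre : {y : Fin (n + 1) → ℝ | ∀ m, y (i.succAbove m) ≤ φ m (y i)}
      = MeasurableEquiv.piFinSuccAbove (fun _ => ℝ) i ⁻¹' T := rfl
  rw [hpre, (measurePreserving_piFinSuccAbove (fun _ => ν) i).measure_preimage_equiv,
    Measure.prod_apply hT]
  refine lintegral_congr fun z => ?_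
  have hslice : Prod.mk z ⁻¹' T = Set.univ.pi fun m => Set.Iic (φ m z) := by
    ext v
    simp [T, Pi.le_def]
  rw [hslice, Measure.pi_pi]

lemma prod_erase_eq_prod_succAbove {M : Type*} [CommMonoid M] {n : ℕ} (f : Fin (n + 1) → M)
    (i : Fin (n + 1)) : ∏ k ∈ Finset.univ.erase i, f k = ∏ m, f (i.succAbove m) := by
  rw [← Finset.compl_singleton, ← Fin.image_succAbove_univ,
    Finset.prod_image Fin.succAbove_right_injective.injOn]

lemma measure_winner_toReal_eq_integral {n : ℕ} (P : Measure Ω) (Z : Fin (n + 1) → Ω → ℝ)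
    (measZ : ∀ i, Measurable (Z i)) (indepZ : iIndepFun Z P)
    (gaussZ : ∀ i, Measure.map (Z i) P = gaussianReal 0 1)
    {s : Fin (n + 1) → ℝ} (hs : ∀ k, 0 < s k) (i : Fin (n + 1)) :
    (P {ω | ∀ k, Z k ω / s k ≤ Z i ω / s i}).toReal
      = ∫ z, condWinProb s i z ∂(gaussianReal 0 1) := by
  have hlaw : P.map (fun ω k => Z k ω) = Measure.pi fun _ => gaussianReal 0 1 := by
    rw [indepZ.map_fun_eq_pi_map fun k => (measZ k).aemeasurable]
    simp only [gaussZ]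
  have hset : {ω | ∀ k, Z k ω / s k ≤ Z i ω / s i} = (fun ω k => Z k ω) ⁻¹'
      {y | ∀ m, y (i.succAbove m) ≤ s (i.succAbove m) * (y i / s i)} := by
    ext ω
    simp only [Set.mem_ofPred_eq, Set.mem_preimage, Fin.forall_iff_succAbove i,
      div_le_iff₀ (hs _), mul_comm _ (s _), mul_div_cancel₀ _ (hs i).ne', le_refl, true_and]
  have hmeas : MeasurableSet
      {y : Fin (n + 1) → ℝ | ∀ m, y (i.succAbove m) ≤ s (i.succAbove m) * (y i / s i)} := by
    simp only [Set.ofPred_forall]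
    exact MeasurableSet.iInter fun m => measurableSet_le (by fun_prop) (by fun_prop)
  rw [hset, ← Measure.map_apply (measurable_pi_lambda _ measZ) hmeas, hlaw,
    measure_pi_succAbove_le_eq_lintegral _ i (φ := fun m z => s (i.succAbove m) * (z / s i))
      fun m => by fun_prop,
    integral_eq_lintegral_of_nonneg_ae (ae_of_all _ (condWinProb_nonneg s i))
      (measurable_condWinProb s i).aestronglyMeasurable]
  congr 1
  refine lintegral_congr fun z => ?_
  rw [condWinProb, prod_erase_eq_prod_succAbove,
    ENNReal.ofReal_prod_of_nonneg fun _ _ => gaussCDF_nonneg _]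
  simp only [gaussCDF, ENNReal.ofReal_toReal (measure_ne_top _ _)]

theorem winner_map_monotone_general
    {r : ℕ} (hr : 3 ≤ r) (P : Measure Ω)
    (Z : Fin r → Ω → ℝ) (measZ : ∀ i, Measurable (Z i))
    (indepZ : iIndepFun Z P)
    (gaussZ : ∀ i, Measure.map (Z i) P = gaussianReal 0 1)
    (x : Fin r → ℝ) (hxpos : ∀ i, 0 < x i)
    (i j : Fin r) (hx : x j < x i) :
    (P {ω | ∀ k, Z k ω / Real.sqrt (x k) ≤ Z i ω / Real.sqrt (x i)}).toReal <
      (P {ω | ∀ k, Z k ω / Real.sqrt (x k) ≤ Z j ω / Real.sqrt (x j)}).toReal := by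
  obtain ⟨n, rfl⟩ : ∃ n, r = n + 1 := ⟨r - 1, by omega⟩
  have hs : ∀ k, 0 < Real.sqrt (x k) := fun k => Real.sqrt_pos.2 (hxpos k)
  have hk : ∃ k, k ≠ i ∧ k ≠ j := by
    obtain ⟨k, hk, hkj⟩ := Finset.exists_mem_ne (s := Finset.univ.erase i)
      (by rw [Finset.card_erase_of_mem (Finset.mem_univ i), Finset.card_fin]; omega) j
    exact ⟨k, Finset.ne_of_mem_erase hk, hkj⟩
  rw [measure_winner_toReal_eq_integral P Z measZ indepZ gaussZ hs i,
    measure_winner_toReal_eq_integral P Z measZ indepZ gaussZ hs j]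
  exact integral_condWinProb_lt hs (Real.sqrt_lt_sqrt (hxpos j).le hx) hk

/-- **Lemma (monotonicity of the pure-noise winner map).**
Let `r ≥ 3`, let `x` lie in the interior of the simplex `Δ_r`, and let `Z_1,…,Z_r` be i.i.d.
standard normals. With `U_i(x) = Z_i/√(x_i)` and `g_i(x) = P(U_i(x) = max_j U_j(x))`,
if `x_i > x_j` for distinct `i ≠ j`, then `g_i(x) < g_j(x)`. -/
theorem winner_map_monotone
    {r : ℕ} (hr : 3 ≤ r) (P : Measure Ω) [IsProbabilityMeasure P]
    (Z : Fin r → Ω → ℝ) (measZ : ∀ i, Measurable (Z i))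
    (indepZ : iIndepFun Z P)
    (gaussZ : ∀ i, Measure.map (Z i) P = gaussianReal 0 1)
    (x : Fin r → ℝ) (hxpos : ∀ i, 0 < x i) (hxsum : ∑ i, x i = 1)
    (i j : Fin r) (hij : i ≠ j) (hx : x j < x i) :
    (P {ω | ∀ k, Z k ω / Real.sqrt (x k) ≤ Z i ω / Real.sqrt (x i)}).toReal <
      (P {ω | ∀ k, Z k ω / Real.sqrt (x k) ≤ Z j ω / Real.sqrt (x j)}).toReal :=
  winner_map_monotone_general hr P Z measZ indepZ gaussZ x hxpos i j hx

end ThompsonStability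
end

section
/- There exists a universal constant c > 0 such that the following holds. Let r ≥ 2, let σ_1,…,σ_r > 0, and define Y_i = σ_i Z_i with i.i.d. standard normal Z_i. Let W_i = Y_i + Δ_i where the Δ_i are (deterministic) perturbations with |Δ_i| ≤ η σ_i for all i and some η ≥ 0. Setting p_i = P(W_i = max_j W_j) and g_i = P(Y_i = max_j Y_j), one has max_i |p_i − g_i| ≤ c r η. -/
open MeasureTheory ProbabilityTheory Filter Real Topology

open scoped Classical

namespace ThompsonStability

variable {Ω : Type} [MeasurableSpace Ω]

/-! The events "`W_i` wins" and "`Y_i` wins" can only differ when some `Y_k` lies within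
`|Δ_k - Δ_i| ≤ η (σ_k + σ_i)` of `Y_i`. Conditioning on the coordinate with the smaller scale,
such a near tie is an interval event for a Gaussian of scale `max σ_k σ_i`, whose density is at
most `1 / √(2π) ≤ 1/2`; hence it has probability at most `2η`, and a union bound over the
`r - 1` competitors gives `2 r η`. -/

open scoped symmDiff

lemma gaussianPDFReal_le (μ : ℝ) (v : NNReal) (x : ℝ) :
    gaussianPDFReal μ v x ≤ (√(2 * π * v))⁻¹ :=
  mul_le_of_le_one_right (by positivity) <| exp_le_one_iff.2 <|
    div_nonpos_of_nonpos_of_nonneg (neg_nonpos.2 (sq_nonneg _)) (by positivity)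

lemma gaussianPDFReal_zero_one_le_half (x : ℝ) : gaussianPDFReal 0 1 x ≤ 1 / 2 := by
  refine (gaussianPDFReal_le 0 1 x).trans ?_
  have h2 : (2 : ℝ) ≤ √(2 * π * (1 : NNReal)) := by
    rw [le_sqrt (by norm_num) (by positivity)]
    norm_num
    linarith [pi_gt_three]
  rw [one_div]
  exact inv_anti₀ two_pos h2

lemma gaussianReal_Icc_le (a b : ℝ) :
    gaussianReal 0 1 (Set.Icc a b) ≤ ENNReal.ofReal ((b - a) / 2) := by
  rw [gaussianReal_apply 0 one_ne_zero]
  calc ∫⁻ x in Set.Icc a b, gaussianPDF 0 1 x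
      ≤ ∫⁻ _ in Set.Icc a b, ENNReal.ofReal (1 / 2) :=
        setLIntegral_mono measurable_const fun x _ =>
          ENNReal.ofReal_le_ofReal (gaussianPDFReal_zero_one_le_half x)
    _ = ENNReal.ofReal ((b - a) / 2) := by
        rw [setLIntegral_const, Real.volume_Icc, ← ENNReal.ofReal_mul (by norm_num)]
        ring_nf

lemma gaussianReal_abs_mul_sub_le {a : ℝ} (ha : 0 < a) (c t : ℝ) :
    gaussianReal 0 1 {x | |a * x - c| ≤ t} ≤ ENNReal.ofReal (t / a) := by
  have hIcc : {x : ℝ | |a * x - c| ≤ t} = Set.Icc ((c - t) / a) ((c + t) / a) := by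
    ext x
    simp only [Set.mem_ofPred_eq, Set.mem_Icc, abs_le, div_le_iff₀ ha, le_div_iff₀ ha]
    constructor <;> rintro ⟨h₁, h₂⟩ <;> constructor <;> linarith
  rw [hIcc]
  refine (gaussianReal_Icc_le _ _).trans_eq ?_
  congr 1
  field_simp
  ring

section NearTie

variable {α : Type*} [MeasurableSpace α] {P : Measure α} [IsProbabilityMeasure P]

lemma measure_abs_mul_sub_le_of_indepFun {X Y : α → ℝ} (hX : Measurable X) (hY : Measurable Y)
    (hXY : IndepFun X Y P) (hgX : P.map X = gaussianReal 0 1) {a : ℝ} (ha : 0 < a) (t : ℝ) :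
    P {ω | |a * X ω - Y ω| ≤ t} ≤ ENNReal.ofReal (t / a) := by
  have := Measure.isProbabilityMeasure_map (μ := P) hY.aemeasurable
  set S := {p : ℝ × ℝ | |a * p.2 - p.1| ≤ t}
  have hS : MeasurableSet S :=
    measurableSet_le ((measurable_snd.const_mul a).sub measurable_fst).abs measurable_const
  have hlaw : P.map (fun ω => (Y ω, X ω)) = (P.map Y).prod (gaussianReal 0 1) := by
    rw [(indepFun_iff_map_prod_eq_prod_map_map hY.aemeasurable hX.aemeasurable).mp hXY.symm, hgX]
  calc P {ω | |a * X ω - Y ω| ≤ t} = P.map (fun ω => (Y ω, X ω)) S :=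
        (Measure.map_apply (hY.prodMk hX) hS).symm
    _ = ∫⁻ y, gaussianReal 0 1 {x | |a * x - y| ≤ t} ∂(P.map Y) := by
        rw [hlaw, Measure.prod_apply hS]
        rfl
    _ ≤ ∫⁻ _, ENNReal.ofReal (t / a) ∂(P.map Y) :=
        lintegral_mono fun y => gaussianReal_abs_mul_sub_le ha y t
    _ = ENNReal.ofReal (t / a) := by simp

lemma measureReal_abs_mul_sub_mul_le {X Y : α → ℝ} (hX : Measurable X) (hY : Measurable Y)
    (hXY : IndepFun X Y P) (hgX : P.map X = gaussianReal 0 1) (hgY : P.map Y = gaussianReal 0 1)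
    {a b t : ℝ} (ha : 0 < a) (hb : 0 < b) (ht : 0 ≤ t) :
    P.real {ω | |a * X ω - b * Y ω| ≤ t} ≤ t / max a b := by
  refine ENNReal.toReal_le_of_le_ofReal (by positivity) ?_
  rcases le_total a b with hab | hab
  · have hset : {ω | |a * X ω - b * Y ω| ≤ t} = {ω | |b * Y ω - a * X ω| ≤ t} := by
      simp only [abs_sub_comm]
    rw [hset, max_eq_right hab]
    exact measure_abs_mul_sub_le_of_indepFun hY (hX.const_mul a)
      (hXY.symm.comp measurable_id (measurable_const_mul a)) hgY hb t
  · rw [max_eq_left hab]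
    exact measure_abs_mul_sub_le_of_indepFun hX (hY.const_mul b)
      (hXY.comp measurable_id (measurable_const_mul b)) hgX ha t

lemma measureReal_abs_mul_sub_mul_le_abs_sub {X Y : α → ℝ} (hX : Measurable X)
    (hY : Measurable Y) (hXY : IndepFun X Y P) (hgX : P.map X = gaussianReal 0 1)
    (hgY : P.map Y = gaussianReal 0 1) {a b η u v : ℝ} (ha : 0 < a) (hb : 0 < b)
    (hu : |u| ≤ η * a) (hv : |v| ≤ η * b) :
    P.real {ω | |a * X ω - b * Y ω| ≤ |u - v|} ≤ 2 * η := by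
  have hmax : 0 < max a b := lt_max_of_lt_left ha
  have hgap : |u - v| ≤ 2 * η * max a b := by
    have hη : 0 ≤ η := nonneg_of_mul_nonneg_left ((abs_nonneg u).trans hu) ha
    nlinarith [abs_sub u v, le_max_left a b, le_max_right a b]
  calc _ ≤ |u - v| / max a b :=
        measureReal_abs_mul_sub_mul_le hX hY hXY hgX hgY ha hb (abs_nonneg _)
    _ ≤ 2 * η := by rwa [div_le_iff₀ hmax]

end NearTie

lemma add_le_add_iff_of_abs_sub_lt {a b c d : ℝ} (h : |c - d| < |a - b|) :
    a + c ≤ b + d ↔ a ≤ b := by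
  rcases le_total a b with hab | hab
  · rw [abs_of_nonpos (sub_nonpos.2 hab)] at h
    exact ⟨fun _ => hab, fun _ => by linarith [le_abs_self (c - d)]⟩
  · rw [abs_of_nonneg (sub_nonneg.2 hab)] at h
    constructor <;> intro _ <;> linarith [neg_abs_le (c - d), abs_nonneg (c - d)]

lemma setOf_isMaxAt_add_symmDiff_subset {α ι : Type*} [Fintype ι] [DecidableEq ι]
    (Y : ι → α → ℝ) (δ : ι → ℝ) (i : ι) :
    {ω | ∀ k, Y k ω + δ k ≤ Y i ω + δ i} ∆ {ω | ∀ k, Y k ω ≤ Y i ω} ⊆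
      ⋃ k ∈ Finset.univ.erase i, {ω | |Y k ω - Y i ω| ≤ |δ k - δ i|} := by
  intro ω hω
  by_contra hnear
  simp only [Set.mem_iUnion, Finset.mem_erase, Finset.mem_univ, and_true, Set.mem_ofPred_eq,
    not_exists, not_le] at hnear
  have hiff : (∀ k, Y k ω + δ k ≤ Y i ω + δ i) ↔ ∀ k, Y k ω ≤ Y i ω := by
    refine forall_congr' fun k => ?_
    rcases eq_or_ne k i with rfl | hk
    · simp
    · exact add_le_add_iff_of_abs_sub_lt (hnear k hk)
  rw [Set.mem_symmDiff] at hω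
  simp only [Set.mem_ofPred_eq] at hω
  tauto

/-- **Lemma (winner perturbation).**
There is a universal constant `c > 0` such that: for every `r ≥ 2`, every probability space,
i.i.d. standard normals `Z_1,…,Z_r`, scales `σ_i > 0`, perturbations `Δ_i` with
`|Δ_i| ≤ η σ_i` (`η ≥ 0`), setting `Y_i = σ_i Z_i`, `W_i = Y_i + Δ_i`,
`p_i = P(W_i = max_j W_j)` and `g_i = P(Y_i = max_j Y_j)`, one has
`max_i |p_i − g_i| ≤ c r η`. -/
theorem winner_perturbation :
    ∃ c : ℝ, 0 < c ∧
      ∀ (r : ℕ), 2 ≤ r →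
      ∀ (Ω' : Type) [MeasurableSpace Ω'] (P : Measure Ω'), IsProbabilityMeasure P →
      ∀ (Z : Fin r → Ω' → ℝ), (∀ i, Measurable (Z i)) →
        iIndepFun Z P →
        (∀ i, Measure.map (Z i) P = gaussianReal 0 1) →
      ∀ (σ : Fin r → ℝ), (∀ i, 0 < σ i) →
      ∀ (Δ : Fin r → ℝ) (η : ℝ), 0 ≤ η → (∀ i, |Δ i| ≤ η * σ i) →
      ∀ i : Fin r,
        |(P {ω | ∀ k, σ k * Z k ω + Δ k ≤ σ i * Z i ω + Δ i}).toReal -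
            (P {ω | ∀ k, σ k * Z k ω ≤ σ i * Z i ω}).toReal| ≤ c * r * η := by
  refine ⟨2, two_pos, fun r _ Ω' _ P _ Z hZ hZindep hZgauss σ hσ Δ η hη hΔ i => ?_⟩
  have hscaled : ∀ k, Measurable fun ω => σ k * Z k ω := fun k => (hZ k).const_mul _
  have hwin : ∀ δ : Fin r → ℝ,
      MeasurableSet {ω | ∀ k, σ k * Z k ω + δ k ≤ σ i * Z i ω + δ i} := fun δ => by
    simp only [Set.ofPred_forall]
    exact .iInter fun k => measurableSet_le ((hscaled k).add_const _) ((hscaled i).add_const _)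
  have hwin₀ : MeasurableSet {ω | ∀ k, σ k * Z k ω ≤ σ i * Z i ω} := by
    simpa using hwin 0
  have htie : ∀ k ∈ Finset.univ.erase i,
      P.real {ω | |σ k * Z k ω - σ i * Z i ω| ≤ |Δ k - Δ i|} ≤ 2 * η := fun k hk =>
    measureReal_abs_mul_sub_mul_le_abs_sub (hZ k) (hZ i)
      (hZindep.indepFun (Finset.ne_of_mem_erase hk)) (hZgauss k) (hZgauss i) (hσ k) (hσ i)
      (hΔ k) (hΔ i)
  calc _ ≤ P.real ({ω | ∀ k, σ k * Z k ω + Δ k ≤ σ i * Z i ω + Δ i} ∆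
          {ω | ∀ k, σ k * Z k ω ≤ σ i * Z i ω}) :=
        abs_measureReal_sub_le_measureReal_symmDiff (hwin Δ).nullMeasurableSet
          hwin₀.nullMeasurableSet
    _ ≤ ∑ k ∈ Finset.univ.erase i, P.real {ω | |σ k * Z k ω - σ i * Z i ω| ≤ |Δ k - Δ i|} :=
        (measureReal_mono (setOf_isMaxAt_add_symmDiff_subset (fun k ω => σ k * Z k ω) Δ i)
          (measure_ne_top _ _)).trans (measureReal_biUnion_finset_le _ _)
    _ ≤ ∑ _k ∈ Finset.univ.erase i, 2 * η := Finset.sum_le_sum htie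
    _ ≤ 2 * r * η := by
        have hcard : ((Finset.univ.erase i).card : ℝ) ≤ r := by
          exact_mod_cast Finset.card_erase_le.trans (by simp)
        rw [Finset.sum_const, nsmul_eq_mul]
        nlinarith

end ThompsonStability
end

section
/- Run Thompson sampling with mean bonus on the K-armed Gaussian bandit. For all sufficiently large T, on the good event G_T the following order-flip property holds: for any two optimal arms i, j ∈ S* and any time t ≤ T − 1, if N_{i,t} ≥ (1 + β(𝒜)^{−1/4}) N_{j,t}, then the next-step indices satisfy Υ_{i,t+1} < Υ_{j,t+1}. -/
open MeasureTheory ProbabilityTheory Filter Real Topology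

open scoped Classical

namespace ThompsonStability

variable {Ω : Type} [MeasurableSpace Ω]

/-! On `G_T` with `C₁ = 1` (any fixed `C₁` would do), the index of an optimal arm is
`μ* + (√(2β log T) + O(√(log T))) / √N_{a,t}`: the deviation of the empirical mean and the
scaled draw are both `O(√(log T / N_{a,t}))`. If `N_i ≥ (1 + ε) N_j` with `ε = β^{-1/4}`, then
`1/√N_i ≤ (1 - ε/4)/√N_j`, so the bonus of `j` beats that of `i` by at least
`(ε/4) √(2β log T / N_j)`, which is of order `β^{1/4} √(log T / N_j)` and hence dominates the
noise terms once `β` is large. -/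

omit [MeasurableSpace Ω] in
lemma one_le_pullCount_of_le {K : ℕ} {A : ℕ → Ω → Fin K} {a : Fin K} {ω : Ω} {t : ℕ}
    (hinit : pullCount A a K ω = 1) (ht : K ≤ t) : 1 ≤ pullCount A a t ω :=
  hinit ▸ Finset.card_le_card (Finset.filter_subset_filter _ (Finset.Icc_subset_Icc_right ht))

lemma sqrt_two_log_le_three_sqrt_log {K T : ℕ} (hK : 0 < K) (hT : 2 * K ≤ T) :
    √(2 * log (2 * K * T ^ 3)) ≤ 3 * √(log T) := by
  have hT0 : (0 : ℝ) < T := by exact_mod_cast (by omega : 0 < T)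
  have h4 : log (2 * K * T ^ 3) ≤ 4 * log T := by
    rw [← Real.log_rpow hT0]
    refine log_le_log (by positivity) ?_
    have : (2 * K : ℝ) ≤ T := by exact_mod_cast hT
    calc (2 * K * T ^ 3 : ℝ) ≤ T * T ^ 3 := by gcongr
      _ = T ^ (4 : ℝ) := by norm_cast; ring
  have hlog : 0 ≤ log T := log_nonneg (by exact_mod_cast (by omega : 1 ≤ T))
  calc √(2 * log (2 * K * T ^ 3)) ≤ √(3 ^ 2 * log T) := sqrt_le_sqrt (by linarith)
    _ = 3 * √(log T) := by rw [sqrt_mul (by norm_num), sqrt_sq (by norm_num)]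

lemma abs_add_div_sqrt_le {n e z a b : ℝ} (hn : 0 < n) (he : |e| ≤ a / √n) (hz : |z| ≤ b) :
    |e + z / √n| ≤ (a + b) / √n := by
  have hs : 0 < √n := sqrt_pos.2 hn
  calc |e + z / √n| ≤ |e| + |z| / √n :=
        (abs_add_le _ _).trans_eq (by rw [abs_div, abs_of_pos hs])
    _ ≤ a / √n + b / √n := by gcongr
    _ = (a + b) / √n := by ring

lemma one_div_sqrt_le_of_one_add_mul_le {ε m n : ℝ} (hε₀ : 0 ≤ ε) (hε₁ : ε ≤ 1) (hn : 0 < n)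
    (h : (1 + ε) * n ≤ m) : 1 / √m ≤ (1 - ε / 4) / √n := by
  have hunit : 1 ≤ (1 - ε / 4) * √(1 + ε) := by
    rw [← sqrt_sq (by linarith : 0 ≤ 1 - ε / 4), ← sqrt_mul (sq_nonneg _), one_le_sqrt]
    nlinarith [mul_nonneg hε₀ hε₀, mul_nonneg (mul_nonneg hε₀ hε₀) hε₀]
  have hm : √((1 + ε) * n) ≤ √m := sqrt_le_sqrt h
  rw [sqrt_mul (by linarith)] at hm
  rw [div_le_div_iff₀ (sqrt_pos.2 (by nlinarith)) (sqrt_pos.2 hn)]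
  nlinarith [sqrt_nonneg n, sqrt_nonneg (1 + ε)]

lemma add_div_sqrt_lt_add_div_sqrt {b c ε m n x y : ℝ} (hε₀ : 0 ≤ ε) (hε₁ : ε ≤ 1)
    (hn : 0 < n) (h : (1 + ε) * n ≤ m) (hgap : 8 * c < ε * b)
    (hx : |x| ≤ c / √m) (hy : |y| ≤ c / √n) :
    x + b / √m < y + b / √n := by
  have hsn : 0 < √n := sqrt_pos.2 hn
  have hsm : 0 < √m := sqrt_pos.2 (by nlinarith)
  have hc : 0 ≤ c := by
    have := mul_nonneg ((abs_nonneg x).trans hx) hsm.le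
    rwa [div_mul_cancel₀ _ hsm.ne'] at this
  have hx' := (le_abs_self x).trans hx
  have hy' := (neg_abs_le y).trans' (neg_le_neg hy)
  calc x + b / √m ≤ (b + c) * (1 / √m) := by rw [mul_one_div, add_div]; linarith
    _ ≤ (b + c) * ((1 - ε / 4) / √n) :=
        mul_le_mul_of_nonneg_left (one_div_sqrt_le_of_one_add_mul_le hε₀ hε₁ hn h) (by nlinarith)
    _ = (b + c) * (1 - ε / 4) / √n := by ring
    _ < (b - c) / √n := by gcongr; nlinarith
    _ ≤ y + b / √n := by rw [sub_div]; linarith [neg_div (√n) c]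

lemma thirtyTwo_mul_sqrt_lt_rpow_neg_quarter_mul_sqrt {β L : ℝ} (hβ : 0 < β)
    (hq : 32 ≤ β ^ (1 / 4 : ℝ)) (hL : 0 < L) :
    32 * √L < β ^ (-(1 / 4 : ℝ)) * √(2 * β * L) := by
  have hquarter : β ^ (-(1 / 4 : ℝ)) * √β = β ^ (1 / 4 : ℝ) := by
    rw [sqrt_eq_rpow, ← rpow_add hβ]; norm_num
  have hsqrt2 : 1 < √2 := by rw [lt_sqrt zero_le_one]; norm_num
  have hsL : 0 < √L := sqrt_pos.2 hL
  calc 32 * √L < √2 * 32 * √L := by gcongr; linarith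
    _ ≤ √2 * β ^ (1 / 4 : ℝ) * √L := by gcongr
    _ = β ^ (-(1 / 4 : ℝ)) * √(2 * β * L) := by
        rw [sqrt_mul (by positivity), sqrt_mul (by norm_num), ← hquarter]; ring

omit [MeasurableSpace Ω] in
lemma mbIndex_eq {K : ℕ} (μ : Fin K → ℝ) (W : ℕ × Fin K × Bool → Ω → ℝ) (β : ℝ) (T : ℕ)
    (A : ℕ → Ω → Fin K) (t : ℕ) (a : Fin K) (ω : Ω) :
    mbIndex μ W β T A t a ω = μ a + ((empMean A (reward μ W) a t ω - μ a) +
      W (t + 1, a, true) ω / √(pullCount A a t ω : ℝ)) +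
      √(2 * β * log T) / √(pullCount A a t ω : ℝ) := by
  rw [mbIndex, sqrt_div' _ (Nat.cast_nonneg _)]; ring

theorem meanBonus_optimal_order_flip_general
    {K : ℕ} (P : Measure Ω)
    (μ : Fin K → ℝ) (μstar : ℝ)
    (βA : ℕ → ℝ)
    (hβ1 : Tendsto βA atTop atTop)
    (A : ℕ → ℕ → Ω → Fin K) (W : ℕ → ℕ × Fin K × Bool → Ω → ℝ)
    (halg : ∀ T, MeanBonusTS K P μ (βA T) T (A T) (W T)) :
    ∃ C₁ : ℝ, 0 < C₁ ∧ ∀ᶠ T : ℕ in atTop,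
      ∀ ω ∈ goodEvent μ (A T) (W T) C₁ T,
      ∀ i j : Fin K, μ i = μstar → μ j = μstar →
      ∀ t : ℕ, K ≤ t → t ≤ T - 1 →
      (1 + βA T ^ (-(1 / 4 : ℝ))) * (pullCount (A T) j t ω : ℝ) ≤
        (pullCount (A T) i t ω : ℝ) →
      mbIndex μ (W T) (βA T) T (A T) t i ω < mbIndex μ (W T) (βA T) T (A T) t j ω := by
  refine ⟨1, one_pos, ?_⟩
  have hroot : Tendsto (fun T => βA T ^ (1 / 4 : ℝ)) atTop atTop :=
    (tendsto_rpow_atTop (by norm_num)).comp hβ1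
  filter_upwards [hβ1.eventually_gt_atTop 0, hroot.eventually_ge_atTop 32,
    eventually_ge_atTop (2 * K)] with T hβ hq hTK
  rintro ω ⟨hconc, hdraw⟩ i j hi hj t hKt htT hpull
  have hK : 0 < K := i.pos
  have hL : 0 < log T := log_pos (by exact_mod_cast (by omega : 1 < T))
  have hn (a : Fin K) : 0 < (pullCount (A T) a t ω : ℝ) := by
    exact_mod_cast one_le_pullCount_of_le ((halg T).init ω a) hKt
  have hdev (a : Fin K) : |empMean (A T) (reward μ (W T)) a t ω - μ a +
      W T (t + 1, a, true) ω / √(pullCount (A T) a t ω : ℝ)| ≤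
        4 * √(log T) / √(pullCount (A T) a t ω : ℝ) := by
    have hmean := hconc a t hKt (by omega)
    rw [one_mul, sqrt_div' _ (Nat.cast_nonneg _)] at hmean
    exact (abs_add_div_sqrt_le (hn a) hmean ((hdraw a (t + 1) (by omega)).trans
      (sqrt_two_log_le_three_sqrt_log hK hTK))).trans_eq (by ring)
  have hε₁ : βA T ^ (-(1 / 4 : ℝ)) ≤ 1 := by
    rw [rpow_neg hβ.le]; exact inv_le_one_of_one_le₀ (by linarith)
  have hflip := add_div_sqrt_lt_add_div_sqrt (b := √(2 * βA T * log T))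
    (rpow_nonneg hβ.le _) hε₁ (hn j) hpull
    (by linarith [thirtyTwo_mul_sqrt_lt_rpow_neg_quarter_mul_sqrt hβ hq hL]) (hdev i) (hdev j)
  rw [mbIndex_eq, mbIndex_eq, hi, hj]
  linarith

/-- **Lemma (order flip among optimal arms, mean-bonus TS).**
For Thompson sampling with mean bonus there is a constant `C₁ > 0` such that, for all
sufficiently large `T`, on the good event `G_T` the following holds: for any two optimal
arms `i, j ∈ S*` and any (post-initialization) time `t ≤ T − 1`, if
`N_{i,t} ≥ (1 + β(𝒜)^{-1/4}) N_{j,t}` then `Υ_{i,t+1} < Υ_{j,t+1}`. -/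
theorem meanBonus_optimal_order_flip
    {K : ℕ} (hK : 2 ≤ K) (P : Measure Ω) [IsProbabilityMeasure P]
    (μ : Fin K → ℝ) (μstar : ℝ) (hμstar : IsGreatest (Set.range μ) μstar)
    (βA : ℕ → ℝ) (hβpos : ∀ T, 0 < βA T)
    (hβ1 : Tendsto βA atTop atTop)
    (hβ2 : Tendsto (fun T : ℕ => βA T * Real.log T / T) atTop (𝓝 0))
    (A : ℕ → ℕ → Ω → Fin K) (W : ℕ → ℕ × Fin K × Bool → Ω → ℝ)
    (halg : ∀ T, MeanBonusTS K P μ (βA T) T (A T) (W T)) :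
    ∃ C₁ : ℝ, 0 < C₁ ∧ ∀ᶠ T : ℕ in atTop,
      ∀ ω ∈ goodEvent μ (A T) (W T) C₁ T,
      ∀ i j : Fin K, μ i = μstar → μ j = μstar →
      ∀ t : ℕ, K ≤ t → t ≤ T - 1 →
      (1 + βA T ^ (-(1 / 4 : ℝ))) * (pullCount (A T) j t ω : ℝ) ≤
        (pullCount (A T) i t ω : ℝ) →
      mbIndex μ (W T) (βA T) T (A T) t i ω < mbIndex μ (W T) (βA T) T (A T) t j ω :=
  meanBonus_optimal_order_flip_general P μ μstar βA hβ1 A W halg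

end ThompsonStability
end
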